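/- arXiv:2404.04371 — 3 statements merged into one kernel-verified Lean document; each statement's English description precedes it below -/
import Mathlib

section
/- For every integer n ≥ 1, the n polynomials Σ_{i=1}^{n} Q_a^{[i;i]}(W,Z), for 0 ≤ a ≤ n−1, are linearly independent over the ring Q_n(2) = ℂ[Q₀,…,Q_n]: if R₀,…,R_{n−1} are polynomials in Q₀,…,Q_n with Σ_{a=0}^{n−1} R_a · (Σ_{i=1}^{n} Q_a^{[i;i]}) = 0 in ℂ[W,Z], then R_a = 0 for every a. -/
noncomputable section

/-- Variables for polynomials in the entries of two `N × N` matrices `W` (`Sum.inl`) and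
`Z` (`Sum.inr`). -/
abbrev WZVars (N : ℕ) := (Fin N × Fin N) ⊕ (Fin N × Fin N)

/-- The polynomial `Q_a(W,Z)` defined by `det(W + λ Z) = Σ_a Q_a(W,Z) λ^a`. -/
def Qpoly (N a : ℕ) : MvPolynomial (WZVars N) ℂ :=
  Polynomial.coeff
    (Matrix.det (Matrix.of fun s t : Fin N =>
      Polynomial.C (MvPolynomial.X (Sum.inl (s, t))) +
        Polynomial.X * Polynomial.C (MvPolynomial.X (Sum.inr (s, t))))) a

/-- The polynomial `Q_a^{[i;i]}(W,Z)`: the coefficient of `λ^a` in the determinant of the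
matrix obtained from `W + λ Z` (of size `n+1`) by deleting row `i` and column `i`. -/
def QpolyMinor (n : ℕ) (i : Fin (n + 1)) (a : ℕ) : MvPolynomial (WZVars (n + 1)) ℂ :=
  Polynomial.coeff
    (Matrix.det (Matrix.of fun s t : Fin n =>
      Polynomial.C (MvPolynomial.X (Sum.inl (i.succAbove s, i.succAbove t))) +
        Polynomial.X *
          Polynomial.C (MvPolynomial.X (Sum.inr (i.succAbove s, i.succAbove t))))) a

/-!
The substitution `W ↦ diag(c) W`, `Z ↦ diag(c) Z` with `∏ c = 1` fixes every `R a` (it fixes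
each `Q_b`) and multiplies `Q_a^{[i;i]}` by `(c i)⁻¹`. Applied to the relation with
`c = (2, …, 2⁻ⁿ, …, 2)` (`2⁻ⁿ` in place `i`) and compared with the relation itself, it isolates
`Σ_a Q_a^{[i;i]} R_a = 0`; so `K R = 0` for `K = (Q_a^{[i;i]})_{i,a}`. Under `W = diag(x)`, `Z = I`
row `i` of `K` becomes the coefficient vector of `∏_{s ≠ i} (λ + x_s)`, which vanishes at
`λ = -x_k` exactly for `k ≠ i`; against a Vandermonde matrix this shows `det K ≠ 0`, hence `R = 0`.
-/

open MvPolynomial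
open scoped Matrix

lemma map_coeff_det {R S ι : Type*} [CommRing R] [CommRing S] [Fintype ι] [DecidableEq ι]
    (f : R →+* S) (M : Matrix ι ι (Polynomial R)) (a : ℕ) :
    f (M.det.coeff a) = (M.map (Polynomial.map f)).det.coeff a := by
  rw [← Polynomial.coeff_map, ← Polynomial.coe_mapRingHom, RingHom.map_det]
  rfl

lemma det_coeff_ne_zero_of_eval_eq_zero {R : Type*} [CommRing R] [IsDomain R] {m : ℕ}
    (p : Fin m → Polynomial R) (y : Fin m → R) (hdeg : ∀ i, (p i).natDegree < m)
    (hoff : ∀ i k, i ≠ k → (p i).eval (y k) = 0) (hdiag : ∀ i, (p i).eval (y i) ≠ 0) :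
    (Matrix.of fun i a : Fin m => (p i).coeff a).det ≠ 0 := by
  have hmul : (Matrix.of fun i a : Fin m => (p i).coeff a) * (Matrix.vandermonde y)ᵀ =
      Matrix.diagonal fun i => (p i).eval (y i) := by
    ext i k
    have hentry : ∑ a : Fin m, (p i).coeff a * y k ^ (a : ℕ) = (p i).eval (y k) := by
      rw [Polynomial.eval_eq_sum_range' (hdeg i),
        Fin.sum_univ_eq_sum_range (fun a => (p i).coeff a * y k ^ a)]
    simp only [Matrix.mul_apply, Matrix.of_apply, Matrix.transpose_apply,
      Matrix.vandermonde_apply, hentry]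
    by_cases hik : i = k
    · subst hik; simp
    · simp [hik, hoff i k hik]
  intro h0
  have := congrArg Matrix.det hmul
  rw [Matrix.det_mul, h0, zero_mul, Matrix.det_diagonal] at this
  exact Finset.prod_ne_zero_iff.mpr (fun i _ => hdiag i) this.symm

lemma two_pow_sub_inv_ne_zero {K : Type*} [Field K] [CharZero K] (n : ℕ) :
    (2 : K) ^ n - 2⁻¹ ≠ 0 := by
  intro h
  have : (2 : K) ^ (n + 1) = 1 := by
    rw [pow_succ, sub_eq_zero.mp h, inv_mul_cancel₀ two_ne_zero]
  exact_mod_cast (Nat.one_lt_two_pow (Nat.succ_ne_zero n)).ne' (by exact_mod_cast this)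

lemma eq_zero_of_forall_sum_inv_smul_eq_zero {K M : Type*} [Field K] [CharZero K] [AddCommGroup M]
    [Module K M] {n : ℕ} (β : Fin (n + 1) → M)
    (h : ∀ c : Fin (n + 1) → K, ∏ j, c j = 1 → ∑ j, (c j)⁻¹ • β j = 0)
    (i : Fin (n + 1)) : β i = 0 := by
  have hsum : ∑ j, β j = 0 := by simpa using h 1 (by simp)
  set c : Fin (n + 1) → K := Function.update (fun _ => 2) i (2⁻¹ ^ n)
  have hc : ∏ j, c j = 1 := by
    rw [Fin.prod_univ_succAbove _ i]
    simp [c, Fin.succAbove_ne]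
  have hinv : ∀ j, (c j)⁻¹ = 2⁻¹ + if j = i then 2 ^ n - 2⁻¹ else 0 := by
    intro j; rcases eq_or_ne j i with rfl | hj <;> simp [c, *]
  have key := h c hc
  simp only [hinv, add_smul, Finset.sum_add_distrib, ← Finset.smul_sum, hsum, ite_smul, zero_smul,
    Finset.sum_ite_eq', Finset.mem_univ, if_true, smul_zero, zero_add] at key
  exact (smul_eq_zero.mp key).resolve_left (two_pow_sub_inv_ne_zero n)

/-- `Qpoly N a` and `QpolyMinor n i a` are by definition coefficients of `det (pencil id)` and
`det (pencil i.succAbove)`. -/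
def pencil {N : ℕ} {ι : Type*} (σ : ι → Fin N) :
    Matrix ι ι (Polynomial (MvPolynomial (WZVars N) ℂ)) :=
  Matrix.of fun s t => Polynomial.C (X (Sum.inl (σ s, σ t))) +
    Polynomial.X * Polynomial.C (X (Sum.inr (σ s, σ t)))

/-- The substitution `W ↦ diag(c) W`, `Z ↦ diag(c) Z`. -/
def rowScale {N : ℕ} (c : Fin N → ℂ) :
    MvPolynomial (WZVars N) ℂ →ₐ[ℂ] MvPolynomial (WZVars N) ℂ :=
  aeval fun v => C (c (Sum.elim Prod.fst Prod.fst v)) * X v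

lemma rowScale_coeff_det_pencil {N : ℕ} {ι : Type*} [Fintype ι] [DecidableEq ι] (c : Fin N → ℂ)
    (σ : ι → Fin N) (a : ℕ) :
    rowScale c ((pencil σ).det.coeff a) = C (∏ s, c (σ s)) * (pencil σ).det.coeff a := by
  have hrows : (pencil σ).map (Polynomial.map (rowScale c : _ →+* _)) =
      Matrix.of fun s t => Polynomial.C (C (c (σ s))) * pencil σ s t := by
    ext1 s t
    simp only [pencil, rowScale, aeval_X, Matrix.map_apply, Matrix.of_apply, Polynomial.map_add,
      Polynomial.map_mul, Polynomial.map_C, Polynomial.map_X, RingHom.coe_coe, Sum.elim_inl,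
      Sum.elim_inr, Polynomial.C_mul]
    ring
  rw [← AlgHom.coe_toRingHom, map_coeff_det, hrows, Matrix.det_mul_column, ← map_prod, ← map_prod,
    Polynomial.coeff_C_mul]

lemma rowScale_Qpoly {N : ℕ} (c : Fin N → ℂ) (b : ℕ) :
    rowScale c (Qpoly N b) = C (∏ s, c s) * Qpoly N b :=
  rowScale_coeff_det_pencil c id b

lemma rowScale_QpolyMinor {n : ℕ} (c : Fin (n + 1) → ℂ) (i : Fin (n + 1)) (a : ℕ) :
    rowScale c (QpolyMinor n i a) = C (∏ s, c (i.succAbove s)) * QpolyMinor n i a :=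
  rowScale_coeff_det_pencil c i.succAbove a

lemma rowScale_eq_self_of_mem_adjoin {N : ℕ} {c : Fin N → ℂ} (hc : ∏ s, c s = 1)
    {P : MvPolynomial (WZVars N) ℂ} (hP : P ∈ Algebra.adjoin ℂ (Set.range (Qpoly N))) :
    rowScale c P = P :=
  (AlgHom.eqOn_adjoin_iff (ψ := AlgHom.id ℂ _)).2
    (by rintro _ ⟨b, rfl⟩; simp [rowScale_Qpoly, hc]) hP

def minorCoeffMatrix (n : ℕ) :
    Matrix (Fin (n + 1)) (Fin (n + 1)) (MvPolynomial (WZVars (n + 1)) ℂ) :=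
  Matrix.of fun i a => QpolyMinor n i a

lemma sum_minorCoeffMatrix_mulVec {n : ℕ} (R : Fin (n + 1) → MvPolynomial (WZVars (n + 1)) ℂ) :
    ∑ i, (minorCoeffMatrix n *ᵥ R) i = ∑ a, R a * ∑ i, QpolyMinor n i a := by
  simp only [Matrix.mulVec, dotProduct, minorCoeffMatrix, Matrix.of_apply, Finset.mul_sum]
  rw [Finset.sum_comm]
  simp_rw [mul_comm]

lemma rowScale_minorCoeffMatrix_mulVec {n : ℕ} {c : Fin (n + 1) → ℂ} (hc : ∏ s, c s = 1)
    {R : Fin (n + 1) → MvPolynomial (WZVars (n + 1)) ℂ} (hR : ∀ a, rowScale c (R a) = R a)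
    (i : Fin (n + 1)) :
    rowScale c ((minorCoeffMatrix n *ᵥ R) i) = (c i)⁻¹ • (minorCoeffMatrix n *ᵥ R) i := by
  have hweight : ∏ s, c (i.succAbove s) = (c i)⁻¹ :=
    eq_inv_of_mul_eq_one_right (by rwa [← Fin.prod_univ_succAbove c i])
  simp only [Matrix.mulVec, dotProduct, minorCoeffMatrix, Matrix.of_apply, map_sum, map_mul,
    rowScale_QpolyMinor, hR, hweight, Finset.smul_sum, smul_eq_C_mul, mul_assoc]

/-- The specialization `W = diag(x)`, `Z = I`. -/
def diagSpec (N : ℕ) : MvPolynomial (WZVars N) ℂ →ₐ[ℂ] MvPolynomial (Fin N) ℂ :=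
  aeval <| Sum.elim (fun p => if p.1 = p.2 then X p.1 else 0)
    (fun p => if p.1 = p.2 then 1 else 0)

lemma diagSpec_coeff_det_pencil {N : ℕ} {ι : Type*} [Fintype ι] [DecidableEq ι] {σ : ι → Fin N}
    (hσ : Function.Injective σ) (a : ℕ) :
    diagSpec N ((pencil σ).det.coeff a) =
      (∏ s, (Polynomial.X + Polynomial.C (X (σ s)))).coeff a := by
  have hdiag : (pencil σ).map (Polynomial.map (diagSpec N : _ →+* MvPolynomial (Fin N) ℂ)) =
      Matrix.diagonal fun s => Polynomial.X + Polynomial.C (X (σ s)) := by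
    ext1 s t
    rcases eq_or_ne s t with rfl | hst
    · simp [pencil, diagSpec, add_comm]
    · simp [pencil, diagSpec, hσ.ne hst, hst]
  rw [← AlgHom.coe_toRingHom, map_coeff_det, hdiag, Matrix.det_diagonal]

lemma det_minorCoeffMatrix_ne_zero (n : ℕ) : (minorCoeffMatrix n).det ≠ 0 := by
  set p : Fin (n + 1) → Polynomial (MvPolynomial (Fin (n + 1)) ℂ) :=
    fun i => ∏ s, (Polynomial.X + Polynomial.C (X (i.succAbove s)))
  have hmap : (minorCoeffMatrix n).map (diagSpec (n + 1)) =
      Matrix.of fun i a : Fin (n + 1) => (p i).coeff a := by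
    ext1 i a
    exact diagSpec_coeff_det_pencil Fin.succAbove_right_injective a
  have hdeg : ∀ i, (p i).natDegree < n + 1 := by
    intro i
    rw [Polynomial.natDegree_prod_of_monic _ _ fun s _ => Polynomial.monic_X_add_C _]
    simp
  have hoff : ∀ i k, i ≠ k → (p i).eval (-X k) = 0 := by
    intro i k hik
    obtain ⟨s, rfl⟩ := Fin.exists_succAbove_eq hik.symm
    simp only [p, Polynomial.eval_prod, Polynomial.eval_add, Polynomial.eval_X, Polynomial.eval_C]
    exact Finset.prod_eq_zero (Finset.mem_univ s) (neg_add_cancel _)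
  have hdiag : ∀ i, (p i).eval (-X i) ≠ 0 := by
    intro i
    simp only [p, Polynomial.eval_prod, Polynomial.eval_add, Polynomial.eval_X, Polynomial.eval_C,
      neg_add_eq_sub]
    exact Finset.prod_ne_zero_iff.mpr fun s _ =>
      sub_ne_zero.mpr fun h => Fin.succAbove_ne i s (X_injective h)
  have hne := det_coeff_ne_zero_of_eval_eq_zero p (fun k => -X k) hdeg hoff hdiag
  intro h0
  apply hne
  rw [← hmap]
  simpa [h0] using ((diagSpec (n + 1)).map_det (minorCoeffMatrix n)).symm

/-- For every matrix size `n + 1 ≥ 1`, the `n + 1` polynomials `Σ_{i} Q_a^{[i;i]}(W,Z)`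
(`0 ≤ a ≤ n`) are linearly independent over the ring `Q_{n+1}(2) = ℂ[Q₀, …, Q_{n+1}]`:
if `R₀, …, R_n` are polynomials in `Q₀, …, Q_{n+1}` with
`Σ_a R_a · (Σ_i Q_a^{[i;i]}) = 0` in `ℂ[W,Z]`, then every `R_a = 0`. -/
theorem stmt9 (n : ℕ) (R : Fin (n + 1) → MvPolynomial (WZVars (n + 1)) ℂ)
    (hR : ∀ a : Fin (n + 1),
      R a ∈ Algebra.adjoin ℂ (Set.range fun b : Fin (n + 2) => Qpoly (n + 1) (b : ℕ)))
    (h : ∑ a : Fin (n + 1), R a * (∑ i : Fin (n + 1), QpolyMinor n i (a : ℕ)) = 0) :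
    ∀ a : Fin (n + 1), R a = 0 := by
  have hfix : ∀ c : Fin (n + 1) → ℂ, ∏ s, c s = 1 → ∀ a, rowScale c (R a) = R a :=
    fun c hc a => rowScale_eq_self_of_mem_adjoin hc
      (Algebra.adjoin_mono (Set.range_comp_subset_range _ _) (hR a))
  have hβ : ∀ i, (minorCoeffMatrix n *ᵥ R) i = 0 :=
    eq_zero_of_forall_sum_inv_smul_eq_zero (K := ℂ) (minorCoeffMatrix n *ᵥ R) fun c hc => by
      simp_rw [← rowScale_minorCoeffMatrix_mulVec hc (hfix c hc), ← map_sum,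
        sum_minorCoeffMatrix_mulVec, h, map_zero]
  exact congrFun (Matrix.eq_zero_of_mulVec_eq_zero (det_minorCoeffMatrix_ne_zero n) (funext hβ))
end
end

section
/- For every integer n ≥ 1, integers k₁ ≥ 1 and 1 ≤ i ≤ n, and every 0 ≤ a ≤ n−1, one has L^{(k₁)}_{i,i}(Q_a(W,Z)) = (k₁ + 1 − n + a)·Q_a^{[i;i]}(W,Z); moreover L^{(k₁)}_{i,i}(Q_n(W,Z)) = 0. -/
noncomputable section

/-- The differential operator
`L^{(k₁)}_{i,j} = k₁·∂/∂w_{i,j} + Σ_{s,t} w_{s,t}·∂²/(∂w_{s,j}∂w_{i,t})`. -/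
def Lop (N : ℕ) (k₁ : ℕ) (i j : Fin N) (Q : MvPolynomial (WZVars N) ℂ) :
    MvPolynomial (WZVars N) ℂ :=
  (k₁ : ℂ) • MvPolynomial.pderiv (Sum.inl (i, j)) Q +
    ∑ s : Fin N, ∑ t : Fin N,
      MvPolynomial.X (Sum.inl (s, t)) *
        MvPolynomial.pderiv (Sum.inl (s, j)) (MvPolynomial.pderiv (Sum.inl (i, t)) Q)


open Polynomial Matrix

-- product rule for derivations over a Finset
lemma der_finset_prod {R A ι : Type*} [CommRing R] [CommRing A] [Algebra R A] [DecidableEq ι]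
    (D : Derivation R A A) (s : Finset ι) (f : ι → A) :
    D (∏ i ∈ s, f i) = ∑ i ∈ s, D (f i) * ∏ j ∈ s.erase i, f j := by
  induction s using Finset.induction_on with
  | empty => simp
  | @insert a s ha ih =>
    rw [Finset.prod_insert ha, D.leibniz, smul_eq_mul, smul_eq_mul, ih, Finset.sum_insert ha,
      Finset.erase_insert ha, Finset.mul_sum]
    rw [add_comm]
    congr 1
    · ring
    · refine Finset.sum_congr rfl fun i hi => ?_
      rw [Finset.erase_insert_of_ne (by rintro rfl; exact ha hi),
        Finset.prod_insert (fun h => ha (Finset.mem_of_mem_erase h))]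
      ring

-- Jacobi formula for derivations
lemma der_det {R A : Type*} [CommRing R] [CommRing A] [Algebra R A]
    (D : Derivation R A A) {m : ℕ} (M : Matrix (Fin m) (Fin m) A) :
    D M.det = ∑ j, (M.updateCol j fun s => D (M s j)).det := by
  rw [Matrix.det_apply, map_sum]
  have key : ∀ σ : Equiv.Perm (Fin m),
      D (Equiv.Perm.sign σ • ∏ i, M (σ i) i)
        = ∑ j, Equiv.Perm.sign σ • (D (M (σ j) j) * ∏ k ∈ Finset.univ.erase j, M (σ k) k) := by
    intro σ
    rw [Units.smul_def, map_zsmul, der_finset_prod, Finset.smul_sum]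
    simp [Units.smul_def]
  rw [Finset.sum_congr rfl fun σ _ => key σ, Finset.sum_comm]
  refine Finset.sum_congr rfl fun j _ => ?_
  rw [Matrix.det_apply]
  refine Finset.sum_congr rfl fun σ _ => ?_
  congr 1
  rw [← Finset.mul_prod_erase Finset.univ _ (Finset.mem_univ j)]
  rw [Matrix.updateCol_self]
  congr 1
  refine Finset.prod_congr rfl fun k hk => ?_
  rw [Matrix.updateCol_ne (Finset.ne_of_mem_erase hk)]

abbrev Rr (N : ℕ) := MvPolynomial (WZVars N) ℂ

/-- coefficientwise pderiv on polynomials over MvPolynomial -/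
def cd {N : ℕ} (v : WZVars N) : Derivation ℂ (Polynomial (Rr N)) (Polynomial (Rr N)) :=
  (LinearEquiv.compDer PolynomialModule.equivPolynomialSelf) ((MvPolynomial.pderiv v).mapCoeffs)

lemma cd_monomial {N : ℕ} (v : WZVars N) (k : ℕ) (x : Rr N) :
    cd v (monomial k x) = monomial k (MvPolynomial.pderiv v x) := by
  show PolynomialModule.equivPolynomialSelf ((MvPolynomial.pderiv v).mapCoeffs (monomial k x)) = _
  rw [Derivation.mapCoeffs_monomial]
  rfl

lemma cd_coeff {N : ℕ} (v : WZVars N) (p : Polynomial (Rr N)) (k : ℕ) :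
    (cd v p).coeff k = MvPolynomial.pderiv v (p.coeff k) := by
  induction p using Polynomial.induction_on' with
  | add p q hp hq => simp [hp, hq]
  | monomial n a =>
    rw [cd_monomial]
    simp only [Polynomial.coeff_monomial]
    split <;> simp

lemma cd_C {N : ℕ} (v : WZVars N) (x : Rr N) :
    cd v (C x) = C (MvPolynomial.pderiv v x) := by
  rw [← monomial_zero_left, cd_monomial, monomial_zero_left]

lemma cd_X_mul_C {N : ℕ} (v : WZVars N) (x : Rr N) :
    cd v (X * C x) = X * C (MvPolynomial.pderiv v x) := by
  have h : ∀ y : Rr N, (X : Polynomial (Rr N)) * C y = monomial 1 y := fun y => by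
    rw [← monomial_one_one_eq_X, monomial_mul_C, one_mul]
  rw [h, h, cd_monomial]

/-- the matrix `W + λ Z` -/
def Ent (N : ℕ) : Matrix (Fin N) (Fin N) (Polynomial (Rr N)) :=
  Matrix.of fun s t : Fin N =>
    C (MvPolynomial.X (Sum.inl (s, t))) + X * C (MvPolynomial.X (Sum.inr (s, t)))

lemma cd_Ent {N : ℕ} (i t s t' : Fin N) :
    cd (Sum.inl (i, t)) (Ent N s t') = if s = i ∧ t' = t then 1 else 0 := by
  rw [Ent, Matrix.of_apply, map_add, cd_C, cd_X_mul_C]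
  rw [MvPolynomial.pderiv_X_of_ne (show (Sum.inr (s, t') : WZVars N) ≠ Sum.inl (i, t) by simp)]
  by_cases hc : s = i ∧ t' = t
  · obtain ⟨rfl, rfl⟩ := hc
    simp
  · rw [MvPolynomial.pderiv_X_of_ne (show (Sum.inl (s, t') : WZVars N) ≠ Sum.inl (i, t) by simp [Prod.ext_iff]; tauto), if_neg hc]
    simp

/-- the matrix `W + λZ` with column `i` replaced by `e_i` -/
def Am (N : ℕ) (i : Fin N) : Matrix (Fin N) (Fin N) (Polynomial (Rr N)) :=
  (Ent N).updateCol i (Pi.single i 1)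

lemma cd_one {N : ℕ} (v : WZVars N) : cd v (1 : Polynomial (Rr N)) = 0 := (cd v).map_one_eq_zero

lemma cdDet1 {N : ℕ} (i t : Fin N) :
    cd (Sum.inl (i, t)) (Ent N).det = ((Ent N).updateCol t (Pi.single i 1)).det := by
  rw [der_det]
  rw [Finset.sum_eq_single t]
  · have hfun : (fun s => cd (Sum.inl (i, t)) (Ent N s t)) = Pi.single i (1 : Polynomial (Rr N)) := by
      funext s
      rw [cd_Ent, Pi.single_apply]
      by_cases h : s = i <;> simp [h]
    rw [hfun]
  · intro j _ hj
    refine Matrix.det_eq_zero_of_column_eq_zero j fun r => ?_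
    rw [Matrix.updateCol_self, cd_Ent, if_neg (by tauto)]
  · intro h; exact absurd (Finset.mem_univ t) h

lemma cdDet2 {N : ℕ} (i t s : Fin N) :
    cd (Sum.inl (s, i)) (((Ent N).updateCol t (Pi.single i 1)).det)
      = if t = i then 0 else
          ((((Ent N).updateCol t (Pi.single i 1))).updateCol i (Pi.single s 1)).det := by
  set B := (Ent N).updateCol t (Pi.single i 1) with hB
  have hcol : ∀ r j, cd (Sum.inl (s, i)) (B r j)
      = if j = t then 0 else (if r = s ∧ j = i then 1 else 0) := by
    intro r j
    rw [hB, Matrix.updateCol_apply]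
    by_cases h : j = t
    · rw [if_pos h, if_pos h, Pi.single_apply]
      by_cases h' : r = i <;> simp [h', cd_one]
    · rw [if_neg h, if_neg h, cd_Ent]
  rw [der_det]
  by_cases ht : t = i
  · rw [if_pos ht]
    refine Finset.sum_eq_zero fun j _ => ?_
    refine Matrix.det_eq_zero_of_column_eq_zero j fun r => ?_
    rw [Matrix.updateCol_self, hcol]
    by_cases h : j = t
    · simp [h]
    · rw [if_neg h, if_neg (by rintro ⟨rfl, rfl⟩; exact h ht.symm)]
  · rw [if_neg ht]
    rw [Finset.sum_eq_single i]
    · have hfun : (fun r => cd (Sum.inl (s, i)) (B r i)) = Pi.single s (1 : Polynomial (Rr N)) := by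
        funext r
        rw [hcol, if_neg (fun h => ht h.symm), Pi.single_apply]
        by_cases h : r = s <;> simp [h]
      rw [hfun]
    · intro j _ hj
      refine Matrix.det_eq_zero_of_column_eq_zero j fun r => ?_
      rw [Matrix.updateCol_self, hcol]
      by_cases h : j = t
      · simp [h]
      · rw [if_neg h, if_neg (by rintro ⟨rfl, rfl⟩; exact hj rfl)]
    · intro h; exact absurd (Finset.mem_univ i) h

lemma key_swap {α : Type*} [CommRing α] {m : ℕ} (M : Matrix (Fin m) (Fin m) α) {i t : Fin m}
    (h : t ≠ i) (b : Fin m → α) :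
    ((M.updateCol t (Pi.single i 1)).updateCol i b).det
      = - ((M.updateCol i (Pi.single i 1)).updateCol t b).det := by
  have hsub : (M.updateCol i (Pi.single i 1)).updateCol t b
      = ((M.updateCol t (Pi.single i 1)).updateCol i b).submatrix id (Equiv.swap i t) := by
    ext r j
    rw [Matrix.submatrix_apply, id_eq]
    rcases eq_or_ne j i with rfl | hji
    · rw [Equiv.swap_apply_left, Matrix.updateCol_ne (Ne.symm h),
        Matrix.updateCol_self, Matrix.updateCol_ne h, Matrix.updateCol_self]
    · rcases eq_or_ne j t with rfl | hjt
      · rw [Equiv.swap_apply_right, Matrix.updateCol_self, Matrix.updateCol_self]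
      · rw [Equiv.swap_apply_of_ne_of_ne hji hjt, Matrix.updateCol_ne hjt,
          Matrix.updateCol_ne hji, Matrix.updateCol_ne hji, Matrix.updateCol_ne hjt]
  rw [hsub, Matrix.det_permute', Equiv.Perm.sign_swap (Ne.symm h)]
  simp

lemma cramer_expand {α : Type*} [CommRing α] {m : ℕ} (M : Matrix (Fin m) (Fin m) α)
    (j : Fin m) (c : Fin m → α) :
    ∑ s, c s * (M.updateCol j (Pi.single s 1)).det = (M.updateCol j c).det := by
  have hc : c = ∑ s, c s • (Pi.single s (1 : α) : Fin m → α) := by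
    funext r
    rw [Finset.sum_apply]
    simp [Pi.single_apply]
  calc ∑ s, c s * (M.updateCol j (Pi.single s 1)).det
      = ∑ s, c s * Matrix.cramer M (Pi.single s 1) j := by
        simp only [Matrix.cramer_apply]
    _ = Matrix.cramer M c j := by
        conv_rhs => rw [hc]
        rw [map_sum]
        rw [Finset.sum_apply]
        refine Finset.sum_congr rfl fun s _ => ?_
        rw [_root_.map_smul]
        simp
    _ = (M.updateCol j c).det := Matrix.cramer_apply _ _ _

lemma restore_col {N : ℕ} (i : Fin N) {t : Fin N} (h : t ≠ i) :
    (Am N i).updateCol t (fun s => Ent N s t) = Am N i := by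
  ext r j
  rcases eq_or_ne j t with rfl | hj
  · rw [Matrix.updateCol_self, Am, Matrix.updateCol_ne h]
  · rw [Matrix.updateCol_ne hj]

lemma dPm (N : ℕ) (i : Fin N) :
    derivative ((Am N i).det) = ∑ t ∈ Finset.univ.erase i,
      ((Am N i).updateCol t
        (fun s => (C (MvPolynomial.X (Sum.inr (s, t))) : Polynomial (Rr N)))).det := by
  have h := der_det (Polynomial.derivative' (R := Rr N)) (Am N i)
  have hD : ∀ p : Polynomial (Rr N), Polynomial.derivative' p = derivative p := fun _ => rfl
  rw [← hD, h, ← Finset.add_sum_erase _ _ (Finset.mem_univ i)]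
  have hz : ((Am N i).updateCol i fun s => Polynomial.derivative' ((Am N i) s i)).det = 0 := by
    refine Matrix.det_eq_zero_of_column_eq_zero i fun r => ?_
    rw [Matrix.updateCol_self, hD, Am, Matrix.updateCol_self, Pi.single_apply]
    by_cases h : r = i <;> simp [h]
  rw [hz, zero_add]
  refine Finset.sum_congr rfl fun t ht => ?_
  have htne : t ≠ i := Finset.ne_of_mem_erase ht
  have hfun : (fun s => Polynomial.derivative' ((Am N i) s t))
      = fun s => (C (MvPolynomial.X (Sum.inr (s, t))) : Polynomial (Rr N)) := by
    funext s
    rw [hD, Am, Matrix.updateCol_ne htne]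
    simp [Ent, derivative_mul]
  rw [hfun]

lemma master (n k₁ : ℕ) (i : Fin (n + 1)) :
    (k₁ : ℂ) • cd (Sum.inl (i, i)) (Ent (n + 1)).det
      + ∑ s, ∑ t, (C (MvPolynomial.X (Sum.inl (s, t))) : Polynomial (Rr (n + 1)))
          * cd (Sum.inl (s, i)) (cd (Sum.inl (i, t)) (Ent (n + 1)).det)
    = ((k₁ : ℂ) - (n : ℂ)) • (Am (n + 1) i).det + X * derivative (Am (n + 1) i).det := by
  have h1 : cd (Sum.inl (i, i)) (Ent (n + 1)).det = (Am (n + 1) i).det := cdDet1 i i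
  rw [h1, Finset.sum_comm]
  have hinner : ∀ t : Fin (n + 1),
      (∑ s, (C (MvPolynomial.X (Sum.inl (s, t))) : Polynomial (Rr (n + 1)))
          * cd (Sum.inl (s, i)) (cd (Sum.inl (i, t)) (Ent (n + 1)).det))
      = if t = i then 0 else
          (- (Am (n + 1) i).det
            + X * ((Am (n + 1) i).updateCol t
                (fun s => (C (MvPolynomial.X (Sum.inr (s, t))) : Polynomial (Rr (n + 1))))).det) := by
    intro t
    by_cases ht : t = i
    · rw [if_pos ht]
      refine Finset.sum_eq_zero fun s _ => ?_
      rw [cdDet1, cdDet2, if_pos ht, mul_zero]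
    · rw [if_neg ht]
      have step1 : ∀ s, (C (MvPolynomial.X (Sum.inl (s, t))) : Polynomial (Rr (n + 1)))
            * cd (Sum.inl (s, i)) (cd (Sum.inl (i, t)) (Ent (n + 1)).det)
          = Ent (n + 1) s t
              * (((Ent (n + 1)).updateCol t (Pi.single i 1)).updateCol i (Pi.single s 1)).det
            - X * ((C (MvPolynomial.X (Sum.inr (s, t))) : Polynomial (Rr (n + 1)))
              * (((Ent (n + 1)).updateCol t (Pi.single i 1)).updateCol i (Pi.single s 1)).det) := by
        intro s
        rw [cdDet1, cdDet2, if_neg ht]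
        rw [show (Ent (n + 1)) s t = C (MvPolynomial.X (Sum.inl (s, t)))
            + X * C (MvPolynomial.X (Sum.inr (s, t))) from rfl]
        ring
      rw [Finset.sum_congr rfl fun s _ => step1 s, Finset.sum_sub_distrib, ← Finset.mul_sum]
      rw [cramer_expand, cramer_expand]
      rw [key_swap _ ht, key_swap _ ht]
      have : ((Ent (n + 1)).updateCol i (Pi.single i 1)).updateCol t (fun s => Ent (n + 1) s t)
          = Am (n + 1) i := restore_col i ht
      rw [show ((Ent (n + 1)).updateCol i (Pi.single i 1)) = Am (n + 1) i from rfl] at *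
      rw [this]
      ring
  rw [Finset.sum_congr rfl fun t _ => hinner t]
  set P := (Am (n + 1) i).det with hP
  set g := fun t : Fin (n + 1) => -P + X * ((Am (n + 1) i).updateCol t
      (fun s => (C (MvPolynomial.X (Sum.inr (s, t))) : Polynomial (Rr (n + 1))))).det with hg
  have hsplit : (∑ t, if t = i then 0 else g t) = ∑ t ∈ Finset.univ.erase i, g t := by
    rw [← Finset.sum_erase Finset.univ
      (f := fun t : Fin (n + 1) => if t = i then 0 else g t) (a := i) (if_pos rfl)]
    exact Finset.sum_congr rfl fun t ht => if_neg (Finset.ne_of_mem_erase ht)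
  rw [hsplit, Finset.sum_add_distrib, Finset.sum_const, ← Finset.mul_sum, ← dPm,
    Finset.card_erase_of_mem (Finset.mem_univ i)]
  have hcard : (Finset.univ : Finset (Fin (n + 1))).card - 1 = n := by simp
  rw [hcard]
  have hns : (n : ℕ) • (-P) = -((n : ℂ) • P) := by
    rw [← Nat.cast_smul_eq_nsmul ℂ n (-P), smul_neg]
  rw [hns, sub_smul]
  abel

lemma det_Am (n : ℕ) (i : Fin (n + 1)) :
    (Am (n + 1) i).det = ((Ent (n + 1)).submatrix i.succAbove i.succAbove).det := by
  rw [Matrix.det_succ_column (Am (n + 1) i) i, Finset.sum_eq_single i]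
  · have hsub : (Am (n + 1) i).submatrix i.succAbove i.succAbove
        = (Ent (n + 1)).submatrix i.succAbove i.succAbove := by
      ext s t
      rw [Matrix.submatrix_apply, Matrix.submatrix_apply, Am,
        Matrix.updateCol_ne (Fin.succAbove_ne i t)]
    rw [hsub, Am, Matrix.updateCol_self, Pi.single_eq_same]
    have hpow : (-1 : Polynomial (Rr (n + 1))) ^ ((i : ℕ) + (i : ℕ)) = 1 := by
      rw [← two_mul, pow_mul]
      norm_num
    rw [hpow]
    ring
  · intro s _ hs
    rw [Am, Matrix.updateCol_self, Pi.single_eq_of_ne hs]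
    ring
  · intro h; exact absurd (Finset.mem_univ i) h

lemma coeff_det_zero {α : Type*} [CommRing α] {m k : ℕ} (hk : m < k)
    (M : Matrix (Fin m) (Fin m) (Polynomial α)) (h : ∀ s t, (M s t).natDegree ≤ 1) :
    (M.det).coeff k = 0 := by
  rw [Matrix.det_apply, Polynomial.finset_sum_coeff]
  refine Finset.sum_eq_zero fun σ _ => ?_
  rw [Units.smul_def, Polynomial.coeff_smul]
  rw [Polynomial.coeff_eq_zero_of_natDegree_lt, smul_zero]
  calc (∏ s, M (σ s) s).natDegree ≤ ∑ s, (M (σ s) s).natDegree := Polynomial.natDegree_prod_le _ _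
    _ ≤ ∑ _s : Fin m, 1 := Finset.sum_le_sum fun s _ => h _ _
    _ = m := by simp
    _ < k := hk

lemma coeff_X_mul_derivative {α : Type*} [CommSemiring α] (p : Polynomial α) (a : ℕ) :
    (X * derivative p).coeff a = (a : α) * p.coeff a := by
  cases a with
  | zero => simp [Polynomial.mul_coeff_zero]
  | succ b =>
    rw [Polynomial.coeff_X_mul, Polynomial.coeff_derivative]
    push_cast
    ring

lemma Ent_natDegree {N : ℕ} (s t : Fin N) : (Ent N s t).natDegree ≤ 1 := by
  refine le_trans (Polynomial.natDegree_add_le _ _) (max_le ?_ ?_)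
  · simp
  · refine le_trans (Polynomial.natDegree_mul_le) ?_
    simp

lemma lop_eq (n k₁ : ℕ) (i : Fin (n + 1)) (a : ℕ) :
    Lop (n + 1) k₁ i i (Qpoly (n + 1) a)
      = ((k₁ : ℂ) - (n : ℂ)) • (((Am (n + 1) i).det).coeff a)
        + (a : Rr (n + 1)) * (((Am (n + 1) i).det).coeff a) := by
  have hQ : Qpoly (n + 1) a = ((Ent (n + 1)).det).coeff a := rfl
  rw [Lop, hQ]
  have h1 : (k₁ : ℂ) • MvPolynomial.pderiv (Sum.inl (i, i)) (((Ent (n + 1)).det).coeff a)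
      = ((k₁ : ℂ) • cd (Sum.inl (i, i)) (Ent (n + 1)).det).coeff a := by
    rw [Polynomial.coeff_smul, cd_coeff]
  have h2 : ∀ s t : Fin (n + 1),
      MvPolynomial.X (Sum.inl (s, t)) * MvPolynomial.pderiv (Sum.inl (s, i))
          (MvPolynomial.pderiv (Sum.inl (i, t)) (((Ent (n + 1)).det).coeff a))
      = ((C (MvPolynomial.X (Sum.inl (s, t))) : Polynomial (Rr (n + 1)))
          * cd (Sum.inl (s, i)) (cd (Sum.inl (i, t)) (Ent (n + 1)).det)).coeff a := by
    intro s t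
    rw [Polynomial.coeff_C_mul, cd_coeff, cd_coeff]
  rw [h1, Finset.sum_congr rfl fun s _ => Finset.sum_congr rfl fun t _ => h2 s t]
  rw [Finset.sum_congr rfl fun s (_ : s ∈ Finset.univ) =>
    (Polynomial.finset_sum_coeff Finset.univ _ a).symm]
  rw [← Polynomial.finset_sum_coeff, ← Polynomial.coeff_add, master n k₁ i,
    Polynomial.coeff_add, Polynomial.coeff_smul, coeff_X_mul_derivative]

/-- For matrices of size `n + 1 ≥ 1`, every `k₁ ≥ 1` and `1 ≤ i ≤ n + 1`:
`L^{(k₁)}_{i,i}(Q_a) = (k₁ + 1 − (n+1) + a)·Q_a^{[i;i]}` for `0 ≤ a ≤ n`, and moreover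
`L^{(k₁)}_{i,i}(Q_{n+1}) = 0`. -/
theorem stmt11 (n k₁ : ℕ) (hk₁ : 1 ≤ k₁) (i : Fin (n + 1)) :
    (∀ a : ℕ, a ≤ n →
      Lop (n + 1) k₁ i i (Qpoly (n + 1) a) =
        ((k₁ : ℂ) + 1 - ((n : ℂ) + 1) + (a : ℂ)) • QpolyMinor n i a) ∧
    Lop (n + 1) k₁ i i (Qpoly (n + 1) (n + 1)) = 0 := by
  have hminor : ∀ a : ℕ, ((Am (n + 1) i).det).coeff a = QpolyMinor n i a := by
    intro a
    rw [det_Am]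
    rfl
  constructor
  · intro a _
    rw [lop_eq, hminor]
    have hna : ((a : ℕ) : Rr (n + 1)) * QpolyMinor n i a = (a : ℂ) • QpolyMinor n i a := by
      rw [MvPolynomial.smul_eq_C_mul, map_natCast]
    rw [hna, ← add_smul]
    congr 1
    ring
  · rw [lop_eq]
    have h0 : ((Am (n + 1) i).det).coeff (n + 1) = 0 := by
      rw [det_Am]
      exact coeff_det_zero (Nat.lt_succ_self n) _ fun s t => Ent_natDegree _ _
    rw [h0]
    simp
end
end

section
/- For every integer n ≥ 1, integers k₂ ≥ 1 and 1 ≤ i ≤ n, and every 1 ≤ a ≤ n, one has L'^{(k₂)}_{i,i}(Q_a(W,Z)) = (k₂ + 1 − a)·Q_{a−1}^{[i;i]}(W,Z); moreover L'^{(k₂)}_{i,i}(Q₀(W,Z)) = 0. -/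
noncomputable section

/-- The differential operator
`L'^{(k₂)}_{i,j} = k₂·∂/∂z_{i,j} + Σ_{s,t} z_{s,t}·∂²/(∂z_{s,j}∂z_{i,t})`. -/
def Lop' (N : ℕ) (k₂ : ℕ) (i j : Fin N) (Q : MvPolynomial (WZVars N) ℂ) :
    MvPolynomial (WZVars N) ℂ :=
  (k₂ : ℂ) • MvPolynomial.pderiv (Sum.inr (i, j)) Q +
    ∑ s : Fin N, ∑ t : Fin N,
      MvPolynomial.X (Sum.inr (s, t)) *
        MvPolynomial.pderiv (Sum.inr (s, j)) (MvPolynomial.pderiv (Sum.inr (i, t)) Q)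

/-!
Write `D = det(W + λZ)` as a polynomial in `λ` with coefficients `Q_a`; all the operators act
coefficientwise. Differentiating the determinant row by row, `∂D/∂z_{i,t} = λ·C_t`, where `C_t`
is the determinant with row `i` replaced by `e_t`. Differentiating `C_t` in `z_{s,i}` vanishes for
`s = i`, and for `s ≠ i` puts `e_i` in row `s`; summing against `z_{s,t}` over `t` puts row `s` of
`Z` in row `i`, and swapping rows `i` and `s` shows that the sum over `s` is `-λ²·dG/dλ`, where
`G = det((W + λZ)^{[i;i]})`. So `L'(D) = k₂·λ·G - λ²·dG/dλ`, whose `λ^a` coefficient is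
`(k₂ - (a - 1))·G_{a-1}`.
-/

open Polynomial Matrix

namespace Derivation

variable {R A : Type*} [CommRing R] [CommRing A] [Algebra R A]

def mapCoeffsSelf (d : Derivation R A A) : Derivation R A[X] A[X] :=
  (PolynomialModule.equivPolynomialSelf : PolynomialModule A A ≃ₗ[A[X]] A[X]).toLinearMap.compDer
    d.mapCoeffs

@[simp]
lemma coeff_mapCoeffsSelf (d : Derivation R A A) (p : A[X]) (i : ℕ) :
    (d.mapCoeffsSelf p).coeff i = d (p.coeff i) := rfl

@[simp]
lemma mapCoeffsSelf_C (d : Derivation R A A) (a : A) : d.mapCoeffsSelf (C a) = C (d a) := by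
  ext i
  simp [coeff_C, apply_ite d]

@[simp]
lemma mapCoeffsSelf_X (d : Derivation R A A) : d.mapCoeffsSelf (X : A[X]) = 0 := by
  ext i
  simp [coeff_X, apply_ite d]

lemma mapCoeffsSelf_X_mul (d : Derivation R A A) (p : A[X]) :
    d.mapCoeffsSelf (X * p) = X * d.mapCoeffsSelf p := by
  ext i
  cases i <;> simp [coeff_X_mul]

lemma leibniz_finset_prod {ι : Type*} [DecidableEq ι] (d : Derivation R A A)
    (s : Finset ι) (f : ι → A) :
    d (∏ i ∈ s, f i) = ∑ i ∈ s, d (f i) * ∏ j ∈ s.erase i, f j := by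
  induction s using Finset.induction_on with
  | empty => simp
  | insert a s ha ih =>
    rw [Finset.prod_insert ha, leibniz, smul_eq_mul, smul_eq_mul, ih,
      Finset.sum_insert ha, Finset.erase_insert ha, Finset.mul_sum, add_comm]
    congr 1
    · ring
    refine Finset.sum_congr rfl fun i hi => ?_
    rw [Finset.erase_insert_of_ne (fun h : a = i => ha (h ▸ hi)), Finset.prod_insert
      (fun h => ha (Finset.mem_of_mem_erase h))]
    ring

variable {n : Type*} [Fintype n] [DecidableEq n]

lemma map_det (d : Derivation R A A) (B : Matrix n n A) :
    d B.det = ∑ s, (B.updateRow s fun t => d (B s t)).det := by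
  simp only [det_apply]
  rw [map_sum, Finset.sum_comm]
  refine Finset.sum_congr rfl fun σ _ => ?_
  rw [Units.smul_def, map_zsmul, d.leibniz_finset_prod, Finset.smul_sum]
  refine Fintype.sum_equiv σ _ _ fun i => ?_
  rw [Units.smul_def, ← Finset.mul_prod_erase Finset.univ _ (Finset.mem_univ i), updateRow_self]
  congr 2
  refine Finset.prod_congr rfl fun j hj => ?_
  rw [updateRow_ne]
  exact fun h => (Finset.mem_erase.mp hj).1 (σ.injective h)

lemma map_det_eq_zero (d : Derivation R A A) {B : Matrix n n A}
    (h : ∀ s t, d (B s t) = 0) : d B.det = 0 := by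
  rw [d.map_det]
  exact Finset.sum_eq_zero fun s _ => det_eq_zero_of_row_eq_zero s fun t => by simp [h]

lemma map_det_eq_mul_det_updateRow_single (d : Derivation R A A) {B : Matrix n n A}
    {p q : n} {c : A} (h : ∀ s t, d (B s t) = if s = p ∧ t = q then c else 0) :
    d B.det = c * (B.updateRow p (Pi.single q 1)).det := by
  rw [d.map_det, Finset.sum_eq_single p]
  · have hrow : (fun t => d (B p t)) = c • Pi.single q 1 := by
      ext t
      simp [h, Pi.single_apply]
    rw [hrow, det_updateRow_smul]
  · intro s _ hs
    exact det_eq_zero_of_row_eq_zero s fun t => by simp [h, hs]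
  · simp

end Derivation

namespace Matrix

variable {A : Type*} [CommRing A] {n : Type*} [Fintype n] [DecidableEq n]

lemma det_updateRow_eq_sum_mul (M : Matrix n n A) (j : n) (u : n → A) :
    (M.updateRow j u).det = ∑ t, u t * (M.updateRow j (Pi.single t 1)).det := by
  calc (M.updateRow j u).det = (M.updateRow j (∑ t, u t • Pi.single t 1)).det := by
        rw [← pi_eq_sum_univ']
    _ = ∑ t, (M.updateRow j (u t • Pi.single t 1)).det :=
        detRowAlternating.map_update_sum _ _ _ _
    _ = ∑ t, u t * (M.updateRow j (Pi.single t 1)).det := by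
        simp only [det_updateRow_smul]

lemma det_updateRow_updateRow_swap (M : Matrix n n A) {i j : n} (hij : i ≠ j) (u v : n → A) :
    ((M.updateRow i u).updateRow j v).det = -((M.updateRow i v).updateRow j u).det := by
  have hperm : (M.updateRow i u).updateRow j v =
      ((M.updateRow i v).updateRow j u).submatrix (Equiv.swap i j) id := by
    ext p q
    rcases eq_or_ne p i with rfl | hpi
    · simp [hij]
    rcases eq_or_ne p j with rfl | hpj
    · simp [updateRow_ne hij]
    · simp [updateRow_ne, hpi, hpj, Equiv.swap_apply_of_ne_of_ne]
  rw [hperm, det_permute, Equiv.Perm.sign_swap hij]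
  simp

lemma det_updateRow_single_self {m : ℕ} (M : Matrix (Fin (m + 1)) (Fin (m + 1)) A)
    (i : Fin (m + 1)) :
    (M.updateRow i (Pi.single i 1)).det = (M.submatrix i.succAbove i.succAbove).det := by
  rw [← adjugate_apply, adjugate_fin_succ_eq_det_submatrix, (Even.add_self _).neg_one_pow,
    one_mul]

end Matrix

lemma Polynomial.coeff_smul_X_mul_sub_X_sq_mul_derivative {K A : Type*} [CommRing K]
    [CommRing A] [Algebra K A] (k : K) (G : A[X]) (b : ℕ) :
    (k • (X * G) - X ^ 2 * derivative G).coeff (b + 1) = (k - b) • G.coeff b := by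
  rw [coeff_sub, coeff_smul, coeff_X_mul, coeff_X_pow_mul', sub_smul]
  congr 1
  cases b with
  | zero => simp
  | succ c =>
    rw [if_pos (by omega), show c + 1 + 1 - 2 = c by omega, coeff_derivative,
      Nat.cast_smul_eq_nsmul, nsmul_eq_mul, mul_comm]
    push_cast
    ring

section WPlusLambdaZ

variable (K : Type*) [CommRing K] {N : ℕ}

/-- `W + λZ`, with `λ` the polynomial variable `X`. -/
def wzMatrix (N : ℕ) : Matrix (Fin N) (Fin N) (MvPolynomial (WZVars N) K)[X] :=
  of fun s t => C (MvPolynomial.X (Sum.inl (s, t))) + X * C (MvPolynomial.X (Sum.inr (s, t)))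

def zRow (s : Fin N) : Fin N → (MvPolynomial (WZVars N) K)[X] :=
  fun t => C (MvPolynomial.X (Sum.inr (s, t)))

variable {K}

abbrev zDeriv (p q : Fin N) : Derivation K (MvPolynomial (WZVars N) K)[X]
    (MvPolynomial (WZVars N) K)[X] :=
  (MvPolynomial.pderiv (Sum.inr (p, q))).mapCoeffsSelf

lemma zDeriv_wzMatrix (p q s t : Fin N) :
    zDeriv p q (wzMatrix K N s t) = if s = p ∧ t = q then X else 0 := by
  simp [wzMatrix, MvPolynomial.pderiv_X, Pi.single_apply]

lemma zDeriv_single_one (p q t u : Fin N) :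
    zDeriv p q ((Pi.single t 1 : Fin N → (MvPolynomial (WZVars N) K)[X]) u) = 0 := by
  simp [Pi.single_apply, apply_ite (zDeriv p q)]

lemma zDeriv_det_wzMatrix (p q : Fin N) :
    zDeriv p q (wzMatrix K N).det = X * ((wzMatrix K N).updateRow p (Pi.single q 1)).det :=
  Derivation.map_det_eq_mul_det_updateRow_single _ (zDeriv_wzMatrix p q)

lemma zDeriv_det_wzMatrix_updateRow_self (i q t : Fin N) :
    zDeriv i q ((wzMatrix K N).updateRow i (Pi.single t 1)).det = 0 := by
  refine Derivation.map_det_eq_zero _ fun s u => ?_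
  rcases eq_or_ne s i with rfl | hsi
  · simp [zDeriv_single_one]
  · simp [zDeriv_wzMatrix, hsi]

lemma zDeriv_det_wzMatrix_updateRow_of_ne {i s : Fin N} (hsi : s ≠ i) (q t : Fin N) :
    zDeriv s q ((wzMatrix K N).updateRow i (Pi.single t 1)).det =
      X * (((wzMatrix K N).updateRow i (Pi.single t 1)).updateRow s (Pi.single q 1)).det := by
  refine Derivation.map_det_eq_mul_det_updateRow_single _ fun r u => ?_
  rcases eq_or_ne r i with rfl | hri
  · simp [zDeriv_single_one, hsi.symm]
  · simp [updateRow_ne hri, zDeriv_wzMatrix]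

lemma derivative_det_wzMatrix_updateRow (i : Fin N) :
    derivative ((wzMatrix K N).updateRow i (Pi.single i 1)).det =
      ∑ s ∈ Finset.univ.erase i,
        (((wzMatrix K N).updateRow i (Pi.single i 1)).updateRow s (zRow K s)).det := by
  rw [← derivative'_apply, Derivation.map_det, ← Finset.sum_erase]
  · refine Finset.sum_congr rfl fun s hs => ?_
    congr 2
    ext t
    simp [updateRow_ne (Finset.ne_of_mem_erase hs), wzMatrix, zRow]
  · refine det_eq_zero_of_row_eq_zero i fun t => ?_
    simp [Pi.single_apply, apply_ite derivative]

lemma sum_C_mul_zDeriv_zDeriv_det_wzMatrix {i s : Fin N} (hsi : s ≠ i) :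
    ∑ t, C (MvPolynomial.X (Sum.inr (s, t))) * zDeriv s i (zDeriv i t (wzMatrix K N).det) =
      -(X ^ 2 * (((wzMatrix K N).updateRow i (Pi.single i 1)).updateRow s (zRow K s)).det) := by
  calc _ = X ^ 2 * ∑ t, zRow K s t *
          (((wzMatrix K N).updateRow s (Pi.single i 1)).updateRow i (Pi.single t 1)).det := by
        rw [Finset.mul_sum]
        refine Finset.sum_congr rfl fun t _ => ?_
        rw [zDeriv_det_wzMatrix, Derivation.mapCoeffsSelf_X_mul,
          zDeriv_det_wzMatrix_updateRow_of_ne hsi, updateRow_comm _ hsi.symm, zRow]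
        ring
    _ = X ^ 2 * (((wzMatrix K N).updateRow s (Pi.single i 1)).updateRow i (zRow K s)).det := by
        rw [det_updateRow_eq_sum_mul]
    _ = _ := by
        rw [det_updateRow_updateRow_swap _ hsi, updateRow_comm _ hsi]
        ring

def lopPoly (k : K) (i : Fin N) (P : (MvPolynomial (WZVars N) K)[X]) :
    (MvPolynomial (WZVars N) K)[X] :=
  k • zDeriv i i P + ∑ s, ∑ t, C (MvPolynomial.X (Sum.inr (s, t))) * zDeriv s i (zDeriv i t P)

lemma lopPoly_det_wzMatrix (k : K) (i : Fin N) :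
    lopPoly k i (wzMatrix K N).det =
      k • (X * ((wzMatrix K N).updateRow i (Pi.single i 1)).det) -
        X ^ 2 * derivative ((wzMatrix K N).updateRow i (Pi.single i 1)).det := by
  have hdiag : ∀ t,
      C (MvPolynomial.X (Sum.inr (i, t))) * zDeriv i i (zDeriv i t (wzMatrix K N).det) = 0 := by
    intro t
    rw [zDeriv_det_wzMatrix, Derivation.mapCoeffsSelf_X_mul, zDeriv_det_wzMatrix_updateRow_self,
      mul_zero, mul_zero]
  rw [lopPoly, zDeriv_det_wzMatrix, derivative_det_wzMatrix_updateRow, Finset.mul_sum,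
    sub_eq_add_neg, ← Finset.sum_neg_distrib,
    ← Finset.sum_erase Finset.univ (a := i) (Finset.sum_eq_zero fun t _ => hdiag t)]
  congr 1
  exact Finset.sum_congr rfl fun s hs =>
    sum_C_mul_zDeriv_zDeriv_det_wzMatrix (Finset.ne_of_mem_erase hs)

end WPlusLambdaZ

lemma coeff_lopPoly {N : ℕ} (k : ℕ) (i : Fin N) (P : (MvPolynomial (WZVars N) ℂ)[X]) (a : ℕ) :
    (lopPoly (k : ℂ) i P).coeff a = Lop' N k i i (P.coeff a) := by
  simp [lopPoly, Lop', finsetSum_coeff, coeff_C_mul]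

theorem stmt12_general (n k₂ : ℕ) (i : Fin (n + 1)) :
    (∀ a : ℕ, 1 ≤ a → a ≤ n + 1 →
      Lop' (n + 1) k₂ i i (Qpoly (n + 1) a) =
        ((k₂ : ℂ) + 1 - (a : ℂ)) • QpolyMinor n i (a - 1)) ∧
    Lop' (n + 1) k₂ i i (Qpoly (n + 1) 0) = 0 := by
  have hQ : ∀ a, Qpoly (n + 1) a = (wzMatrix ℂ (n + 1)).det.coeff a := fun _ => rfl
  have hQminor : ∀ b, QpolyMinor n i b =
      ((wzMatrix ℂ (n + 1)).updateRow i (Pi.single i 1)).det.coeff b := by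
    intro b
    rw [det_updateRow_single_self]
    rfl
  refine ⟨fun a ha _ => ?_, ?_⟩
  · obtain ⟨b, rfl⟩ := Nat.exists_eq_add_of_le' ha
    rw [hQ, ← coeff_lopPoly, lopPoly_det_wzMatrix, coeff_smul_X_mul_sub_X_sq_mul_derivative,
      hQminor, Nat.add_sub_cancel]
    congr 1
    push_cast
    ring
  · rw [hQ, ← coeff_lopPoly, lopPoly_det_wzMatrix]
    simp

/-- For matrices of size `n + 1 ≥ 1`, every `k₂ ≥ 1` and `1 ≤ i ≤ n + 1`:
`L'^{(k₂)}_{i,i}(Q_a) = (k₂ + 1 − a)·Q_{a−1}^{[i;i]}` for `1 ≤ a ≤ n + 1`, and moreover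
`L'^{(k₂)}_{i,i}(Q₀) = 0`. -/
theorem stmt12 (n k₂ : ℕ) (hk₂ : 1 ≤ k₂) (i : Fin (n + 1)) :
    (∀ a : ℕ, 1 ≤ a → a ≤ n + 1 →
      Lop' (n + 1) k₂ i i (Qpoly (n + 1) a) =
        ((k₂ : ℂ) + 1 - (a : ℂ)) • QpolyMinor n i (a - 1)) ∧
    Lop' (n + 1) k₂ i i (Qpoly (n + 1) 0) = 0 :=
  stmt12_general n k₂ i

end
end
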